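/- arXiv:2603.23894 — 4 statements merged into one kernel-verified Lean document; each statement's English description precedes it below -/
import Mathlib

section
/- Let h_1 ≥ h_2 ≥ … ≥ h_k > 0 with h_1+…+h_k ≤ n, and set h_{k+1} = n − (h_1+…+h_k). Then an incomplete latin square ILS(n; h_1…h_k) exists if and only if there exists an outline square O associated to the partition P = (h_1,…,h_{k+1}) of n with O_i(i,i) = h_i² for all i ∈ [k]. -/
/-- A latin square of order `n`: each row and each column is a bijection. -/
def IsLatinSquare {n : ℕ} (L : Fin n → Fin n → Fin n) : Prop :=
  (∀ i, Function.Bijective (L i)) ∧ (∀ j, Function.Bijective (fun i => L i j))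

/-- `ILS n k h` : a latin square of order `n` with `k` pairwise disjoint subsquares
of orders `h 0, …, h (k-1)`. -/
def ILS (n k : ℕ) (h : Fin k → ℕ) : Prop :=
  ∃ L : Fin n → Fin n → Fin n, IsLatinSquare L ∧
    ∃ R C S : Fin k → Finset (Fin n),
      (∀ a, (R a).card = h a ∧ (C a).card = h a ∧ (S a).card = h a) ∧
      (∀ a, ∀ i ∈ R a, ∀ j ∈ C a, L i j ∈ S a) ∧
      (∀ a b, a ≠ b →
        Disjoint (R a) (R b) ∧ Disjoint (C a) (C b) ∧ Disjoint (S a) (S b))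

/-- An outline square associated to the partition `p`:
`O i j ℓ` is the multiplicity of symbol `ℓ` in cell `(i,j)`. -/
def IsOutlineSquare {u : ℕ} (p : Fin u → ℕ) (O : Fin u → Fin u → Fin u → ℕ) : Prop :=
  (∀ i j, ∑ ℓ, O i j ℓ = p i * p j) ∧
  (∀ i ℓ, ∑ j, O i j ℓ = p i * p ℓ) ∧
  (∀ j ℓ, ∑ i, O i j ℓ = p j * p ℓ)

namespace ILSAux

open Finset

lemma exists_le_sum_eq {β : Type*} [Fintype β] [DecidableEq β] (g : β → ℕ) (t : ℕ)
    (ht : t ≤ ∑ b, g b) : ∃ m : β → ℕ, (∀ b, m b ≤ g b) ∧ ∑ b, m b = t := by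
  induction t with
  | zero => exact ⟨fun _ => 0, fun _ => Nat.zero_le _, by simp⟩
  | succ t ih =>
    obtain ⟨m, hm, hs⟩ := ih (Nat.le_of_succ_le ht)
    have : ∃ b, m b < g b := by
      by_contra hc
      push_neg at hc
      have h1 : ∑ b, g b ≤ ∑ b, m b := Finset.sum_le_sum (fun b _ => hc b)
      omega
    obtain ⟨b0, hb0⟩ := this
    have hsplit : ∑ b, m b = m b0 + ∑ b ∈ univ.erase b0, m b :=
      (Finset.add_sum_erase univ m (mem_univ b0)).symm
    refine ⟨Function.update m b0 (m b0 + 1), ?_, ?_⟩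
    · intro b
      by_cases hb : b = b0
      · subst hb; simp [Function.update_self]; omega
      · simp [Function.update_of_ne hb, hm b]
    · have hsplit2 : ∑ b, Function.update m b0 (m b0 + 1) b
          = (m b0 + 1) + ∑ b ∈ univ.erase b0, Function.update m b0 (m b0 + 1) b := by
        rw [← Finset.add_sum_erase univ _ (mem_univ b0), Function.update_self]
      have herase : ∑ b ∈ univ.erase b0, Function.update m b0 (m b0 + 1) b
          = ∑ b ∈ univ.erase b0, m b := by
        refine Finset.sum_congr rfl fun b hb => ?_
        rw [Function.update_of_ne (Finset.ne_of_mem_erase hb)]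
      omega

/-- Chunking: a family with total `d * r` can be split into `r` pieces of total `d` each. -/
lemma chunk {β : Type*} [Fintype β] [DecidableEq β] (d : ℕ) :
    ∀ (r : ℕ) (g : β → ℕ), (∑ b, g b = d * r) →
    ∃ m : Fin r → β → ℕ, (∀ i, ∑ b, m i b = d) ∧ (∀ b, ∑ i, m i b = g b) := by
  intro r
  induction r with
  | zero =>
    intro g hg
    refine ⟨fun i => i.elim0, fun i => i.elim0, fun b => ?_⟩
    have : g b = 0 := Finset.sum_eq_zero_iff.mp (by simpa using hg) b (mem_univ b)
    simp [this]
  | succ r ih =>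
    intro g hg
    have hd : d ≤ ∑ b, g b := by rw [hg]; nlinarith
    obtain ⟨m0, hm0le, hm0⟩ := exists_le_sum_eq g d hd
    have hsub : ∑ b, (g b - m0 b) = d * r := by
      have h1 : ∑ b, (g b - m0 b) + ∑ b, m0 b = ∑ b, g b := by
        rw [← Finset.sum_add_distrib]
        exact Finset.sum_congr rfl fun b _ => by have := hm0le b; omega
      rw [hm0, hg] at h1
      have h2 : d * (r + 1) = d * r + d := by ring
      omega
    obtain ⟨m, hm1, hm2⟩ := ih (fun b => g b - m0 b) hsub
    refine ⟨Fin.cons m0 m, ?_, ?_⟩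
    · intro i
      refine Fin.cases ?_ ?_ i
      · simpa using hm0
      · intro j; simpa using hm1 j
    · intro b
      rw [Fin.sum_univ_succ]
      simp only [Fin.cons_zero, Fin.cons_succ]
      rw [hm2 b]
      have := hm0le b; omega

/-- A `d`-regular bipartite multigraph (`d ≥ 1`) has a perfect matching. -/
lemma regular_matching {A B : Type*} [Fintype A] [Fintype B] [DecidableEq B]
    (M : A → B → ℕ) (d : ℕ) (hd : 0 < d)
    (hrow : ∀ a, ∑ b, M a b = d) (hcol : ∀ b, ∑ a, M a b = d) :
    ∃ f : A → B, Function.Bijective f ∧ ∀ a, 0 < M a (f a) := by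
  classical
  set t : A → Finset B := fun a => univ.filter fun b => 0 < M a b with ht
  have hall : ∀ s : Finset A, s.card ≤ (s.biUnion t).card := by
    intro s
    have h1 : d * s.card = ∑ a ∈ s, ∑ b, M a b := by
      simp [hrow, mul_comm]
    have h2 : ∀ a ∈ s, ∑ b, M a b = ∑ b ∈ s.biUnion t, M a b := by
      intro a ha
      refine (Finset.sum_subset (Finset.subset_univ _) ?_).symm
      intro b _ hb
      by_contra hMb
      have : b ∈ t a := by simp [ht]; omega
      exact hb (Finset.mem_biUnion.mpr ⟨a, ha, this⟩)
    have h3 : d * s.card ≤ d * (s.biUnion t).card := by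
      rw [h1]
      calc ∑ a ∈ s, ∑ b, M a b = ∑ a ∈ s, ∑ b ∈ s.biUnion t, M a b :=
            Finset.sum_congr rfl h2
        _ = ∑ b ∈ s.biUnion t, ∑ a ∈ s, M a b := Finset.sum_comm
        _ ≤ ∑ b ∈ s.biUnion t, ∑ a, M a b := by
            refine Finset.sum_le_sum fun b _ => ?_
            exact Finset.sum_le_sum_of_subset (Finset.subset_univ s)
        _ = ∑ b ∈ s.biUnion t, d := Finset.sum_congr rfl fun b _ => hcol b
        _ = (s.biUnion t).card * d := by rw [Finset.sum_const, smul_eq_mul]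
        _ = d * (s.biUnion t).card := mul_comm _ _
    exact Nat.le_of_mul_le_mul_left h3 hd
  obtain ⟨f, finj, hf⟩ := (Finset.all_card_le_biUnion_card_iff_exists_injective t).mp hall
  have hcard : Fintype.card A = Fintype.card B := by
    have e1 : ∑ a : A, ∑ b, M a b = Fintype.card A * d := by
      rw [Finset.sum_congr rfl fun a _ => hrow a, Finset.sum_const, smul_eq_mul, card_univ]
    have e2 : ∑ b : B, ∑ a, M a b = Fintype.card B * d := by
      rw [Finset.sum_congr rfl fun b _ => hcol b, Finset.sum_const, smul_eq_mul, card_univ]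
    have e3 : Fintype.card A * d = Fintype.card B * d := by
      rw [← e1, ← e2, Finset.sum_comm]
    exact Nat.eq_of_mul_eq_mul_right hd e3
  refine ⟨f, (Fintype.bijective_iff_injective_and_card f).mpr ⟨finj, hcard⟩, fun a => ?_⟩
  have := hf a
  simp [ht] at this
  exact this

/-- Peel off one "layer" with margins `(r, c)` from a matrix with margins `(d*r, d*c)`. -/
lemma peel {A B : Type*} [Fintype A] [Fintype B] [DecidableEq A] [DecidableEq B]
    (M : A → B → ℕ) (d : ℕ) (hd : 0 < d) (r : A → ℕ) (c : B → ℕ)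
    (hrow : ∀ a, ∑ b, M a b = d * r a) (hcol : ∀ b, ∑ a, M a b = d * c b) :
    ∃ X : A → B → ℕ, (∀ a b, X a b ≤ M a b) ∧ (∀ a, ∑ b, X a b = r a)
      ∧ (∀ b, ∑ a, X a b = c b) := by
  classical
  have step1 : ∀ a : A, ∃ m : Fin (r a) → B → ℕ,
      (∀ i, ∑ b, m i b = d) ∧ (∀ b, ∑ i, m i b = M a b) :=
    fun a => chunk d (r a) (M a) (hrow a)
  choose m1 hm1d hm1g using step1
  have step2 : ∀ b : B, ∃ m : Fin (c b) → (Σ a : A, Fin (r a)) → ℕ,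
      (∀ l, ∑ x, m l x = d) ∧ (∀ x, ∑ l, m l x = m1 x.1 x.2 b) := by
    intro b
    refine chunk d (c b) (fun x : Σ a : A, Fin (r a) => m1 x.1 x.2 b) ?_
    rw [← Finset.univ_sigma_univ, Finset.sum_sigma]
    simp only [hm1g]
    exact hcol b
  choose m2 hm2d hm2g using step2
  have hrow' : ∀ x : Σ a : A, Fin (r a),
      ∑ y : Σ b : B, Fin (c b), m2 y.1 y.2 x = d := by
    intro x
    rw [← Finset.univ_sigma_univ, Finset.sum_sigma]
    calc ∑ b, ∑ l, m2 b l x = ∑ b, m1 x.1 x.2 b :=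
          Finset.sum_congr rfl fun b _ => hm2g b x
      _ = d := hm1d x.1 x.2
  have hcol' : ∀ y : Σ b : B, Fin (c b),
      ∑ x : Σ a : A, Fin (r a), m2 y.1 y.2 x = d := fun y => hm2d y.1 y.2
  obtain ⟨f, fbij, hfpos⟩ := regular_matching
    (fun (x : Σ a : A, Fin (r a)) (y : Σ b : B, Fin (c b)) => m2 y.1 y.2 x) d hd hrow' hcol'
  refine ⟨fun a b => ∑ i : Fin (r a), if (f ⟨a, i⟩).1 = b then 1 else 0, ?_, ?_, ?_⟩
  · intro a b
    have hM : M a b = ∑ i : Fin (r a), ∑ l : Fin (c b), m2 b l ⟨a, i⟩ := by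
      rw [← hm1g a b]
      exact Finset.sum_congr rfl fun i _ => (hm2g b ⟨a, i⟩).symm
    rw [hM]
    refine Finset.sum_le_sum fun i _ => ?_
    by_cases hfb : (f ⟨a, i⟩).1 = b
    · rcases hy : f ⟨a, i⟩ with ⟨b', l⟩
      have hb' : b' = b := by rw [hy] at hfb; exact hfb
      subst hb'
      have hpos := hfpos ⟨a, i⟩
      rw [hy] at hpos
      simp only [hfb, if_pos]
      calc 1 ≤ m2 b' l ⟨a, i⟩ := hpos
        _ ≤ ∑ l' : Fin (c b'), m2 b' l' ⟨a, i⟩ :=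
            Finset.single_le_sum (f := fun l' => m2 b' l' ⟨a, i⟩)
              (fun _ _ => Nat.zero_le _) (mem_univ l)
    · simp [hfb]
  · intro a
    rw [Finset.sum_comm]
    simp
  · intro b
    have e1 : ∑ a : A, ∑ i : Fin (r a), (if (f ⟨a, i⟩).1 = b then (1:ℕ) else 0)
        = ∑ x : Σ a : A, Fin (r a), (if (f x).1 = b then (1:ℕ) else 0) := by
      rw [← Finset.univ_sigma_univ, Finset.sum_sigma]
    have e2 : ∑ x : Σ a : A, Fin (r a), (if (f x).1 = b then (1:ℕ) else 0)
        = ∑ y : Σ b : B, Fin (c b), (if y.1 = b then (1:ℕ) else 0) :=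
      Fintype.sum_bijective f fbij _ _ (fun x => rfl)
    have e3 : ∑ y : Σ b' : B, Fin (c b'), (if y.1 = b then (1:ℕ) else 0) = c b := by
      rw [← Finset.univ_sigma_univ, Finset.sum_sigma]
      have h4 : ∀ b' : B, ∑ _l : Fin (c b'), (if b' = b then (1:ℕ) else 0)
          = if b' = b then c b' else 0 := by
        intro b'
        by_cases hb : b' = b <;> simp [hb]
      rw [Finset.sum_congr rfl fun b' _ => h4 b']
      simp
    rw [e1, e2, e3]

/-- Decompose a matrix with margins `(d*r, d*c)` into `d` layers with margins `(r, c)`. -/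
lemma decompose {A B : Type*} [Fintype A] [Fintype B] [DecidableEq A] [DecidableEq B]
    (d : ℕ) : ∀ (M : A → B → ℕ) (r : A → ℕ) (c : B → ℕ),
    (∀ a, ∑ b, M a b = d * r a) → (∀ b, ∑ a, M a b = d * c b) →
    ∃ N : Fin d → A → B → ℕ, (∀ a b, ∑ i, N i a b = M a b) ∧
      (∀ i a, ∑ b, N i a b = r a) ∧ (∀ i b, ∑ a, N i a b = c b) := by
  induction d with
  | zero =>
    intro M r c hrow hcol
    refine ⟨fun i => i.elim0, fun a b => ?_, fun i => i.elim0, fun i => i.elim0⟩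
    have : M a b = 0 := by
      have h0 : ∑ b, M a b = 0 := by rw [hrow a]; ring
      exact Finset.sum_eq_zero_iff.mp h0 b (mem_univ b)
    simp [this]
  | succ d ih =>
    intro M r c hrow hcol
    obtain ⟨X, hXle, hXr, hXc⟩ := peel M (d + 1) (Nat.succ_pos d) r c hrow hcol
    have hrow' : ∀ a, ∑ b, (M a b - X a b) = d * r a := by
      intro a
      have h1 : ∑ b, (M a b - X a b) + ∑ b, X a b = ∑ b, M a b := by
        rw [← Finset.sum_add_distrib]
        exact Finset.sum_congr rfl fun b _ => by have := hXle a b; omega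
      rw [hXr a, hrow a] at h1
      have : (d + 1) * r a = d * r a + r a := by ring
      omega
    have hcol' : ∀ b, ∑ a, (M a b - X a b) = d * c b := by
      intro b
      have h1 : ∑ a, (M a b - X a b) + ∑ a, X a b = ∑ a, M a b := by
        rw [← Finset.sum_add_distrib]
        exact Finset.sum_congr rfl fun a _ => by have := hXle a b; omega
      rw [hXc b, hcol b] at h1
      have : (d + 1) * c b = d * c b + c b := by ring
      omega
    obtain ⟨N, hN1, hN2, hN3⟩ := ih (fun a b => M a b - X a b) r c hrow' hcol'
    refine ⟨Fin.cons X N, fun a b => ?_, fun i => ?_, fun i => ?_⟩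
    · rw [Fin.sum_univ_succ]
      simp only [Fin.cons_zero, Fin.cons_succ]
      rw [hN1 a b]
      have := hXle a b; omega
    · refine Fin.cases ?_ ?_ i
      · simpa using hXr
      · intro j; simpa using hN2 j
    · refine Fin.cases ?_ ?_ i
      · simpa using hXc
      · intro j; simpa using hN3 j

lemma pos_of_sum_eq_one {β : Type*} [Fintype β] (f : β → ℕ) (h1 : ∑ b, f b = 1) :
    ∃ b, 0 < f b := by
  by_contra hc
  push_neg at hc
  have : ∑ b, f b = 0 := Finset.sum_eq_zero fun b _ => Nat.le_zero.mp (hc b)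
  omega

lemma eq_of_pos_of_sum_eq_one {β : Type*} [Fintype β] [DecidableEq β] (f : β → ℕ)
    (h1 : ∑ b, f b = 1) {x y : β} (hx : 0 < f x) (hy : 0 < f y) : x = y := by
  by_contra hne
  have hy' : y ∈ univ.erase x := Finset.mem_erase.mpr ⟨Ne.symm hne, mem_univ y⟩
  have h2 : f y ≤ ∑ b ∈ univ.erase x, f b :=
    Finset.single_le_sum (fun _ _ => Nat.zero_le _) hy'
  have h3 : f x + ∑ b ∈ univ.erase x, f b = ∑ b, f b :=
    Finset.add_sum_erase univ f (mem_univ x)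
  omega

lemma classify {n k : ℕ} (h : Fin k → ℕ)
    (T : Fin k → Finset (Fin n)) (hcard : ∀ a, (T a).card = h a)
    (hdisj : ∀ a b, a ≠ b → Disjoint (T a) (T b)) :
    ∃ cl : Fin n → Fin (k+1),
      (∀ x a, cl x = a.castSucc ↔ x ∈ T a) ∧
      (∀ i, (∑ x, if cl x = i then (1:ℕ) else 0)
        = (Fin.snoc h (n - ∑ a, h a) : Fin (k+1) → ℕ) i) := by
  classical
  set cl : Fin n → Fin (k+1) :=
    fun x => if hx : ∃ a, x ∈ T a then hx.choose.castSucc else Fin.last k with hcl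
  have hchoice : ∀ (x : Fin n) (hx : ∃ a, x ∈ T a), cl x = hx.choose.castSucc :=
    fun x hx => dif_pos hx
  have hlast0 : ∀ (x : Fin n), ¬(∃ a, x ∈ T a) → cl x = Fin.last k :=
    fun x hx => dif_neg hx
  have hiff : ∀ x a, cl x = a.castSucc ↔ x ∈ T a := by
    intro x a
    constructor
    · intro hcleq
      by_cases hx : ∃ a, x ∈ T a
      · rw [hchoice x hx] at hcleq
        have := Fin.castSucc_injective k hcleq
        rw [← this]
        exact hx.choose_spec
      · rw [hlast0 x hx] at hcleq
        exact absurd hcleq.symm (Fin.castSucc_lt_last a).ne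
    · intro hmem
      have hx : ∃ a, x ∈ T a := ⟨a, hmem⟩
      rw [hchoice x hx]
      congr 1
      by_contra hne
      exact Finset.disjoint_left.mp (hdisj _ _ hne) hx.choose_spec hmem
  refine ⟨cl, hiff, ?_⟩
  have hfibc : ∀ a : Fin k, (∑ x, if cl x = a.castSucc then (1:ℕ) else 0) = h a := by
    intro a
    rw [← hcard a, ← Finset.card_filter]
    congr 1
    ext x
    simp [hiff x a]
  have htot : ∑ j : Fin (k+1), (∑ x, if cl x = j then (1:ℕ) else 0) = n := by
    rw [Finset.sum_comm]
    have h1 : ∀ x : Fin n, ∑ j : Fin (k+1), (if cl x = j then (1:ℕ) else 0) = 1 := by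
      intro x
      simp [Finset.sum_ite_eq]
    rw [Finset.sum_congr rfl fun x _ => h1 x]
    simp
  have hlast : (∑ x, if cl x = Fin.last k then (1:ℕ) else 0) = n - ∑ a, h a := by
    rw [Fin.sum_univ_castSucc] at htot
    have h2 : ∑ a : Fin k, (∑ x, if cl x = a.castSucc then (1:ℕ) else 0) = ∑ a, h a :=
      Finset.sum_congr rfl fun a _ => hfibc a
    rw [h2] at htot
    omega
  intro i
  refine Fin.lastCases ?_ ?_ i
  · rw [hlast, Fin.snoc_last]
  · intro a
    rw [hfibc a, Fin.snoc_castSucc]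

end ILSAux

open Finset ILSAux in
/-- The forward direction: an ILS yields an outline square by amalgamation. -/
lemma ils_to_outline {n k : ℕ} (h : Fin k → ℕ) (hILS : ILS n k h) :
    ∃ O : Fin (k + 1) → Fin (k + 1) → Fin (k + 1) → ℕ,
      IsOutlineSquare (Fin.snoc h (n - ∑ i, h i)) O ∧
      ∀ i : Fin k, O i.castSucc i.castSucc i.castSucc = (h i) ^ 2 := by
  classical
  obtain ⟨L, hL, R, C, S, hcards, hsub, hdisj⟩ := hILS
  set pp : Fin (k+1) → ℕ := Fin.snoc h (n - ∑ i, h i) with hpp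
  obtain ⟨clR, hRiff, hRfib⟩ := classify h R (fun a => (hcards a).1)
    (fun a b hab => (hdisj a b hab).1)
  obtain ⟨clC, hCiff, hCfib⟩ := classify h C (fun a => (hcards a).2.1)
    (fun a b hab => (hdisj a b hab).2.1)
  obtain ⟨clS, hSiff, hSfib⟩ := classify h S (fun a => (hcards a).2.2)
    (fun a b hab => (hdisj a b hab).2.2)
  refine ⟨fun i j l => ∑ r : Fin n, ∑ c : Fin n,
    (if clR r = i then 1 else 0) *
      ((if clC c = j then 1 else 0) * (if clS (L r c) = l then 1 else 0)),
    ⟨?_, ?_, ?_⟩, ?_⟩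
  · -- cell sums
    intro i j
    have e1 : ∀ r c : Fin n,
        ∑ l : Fin (k+1), (if clR r = i then (1:ℕ) else 0) *
          ((if clC c = j then 1 else 0) * (if clS (L r c) = l then 1 else 0))
        = (if clR r = i then 1 else 0) * (if clC c = j then 1 else 0) := by
      intro r c
      rw [← Finset.mul_sum, ← Finset.mul_sum]
      simp [Finset.sum_ite_eq]
    calc ∑ l, ∑ r : Fin n, ∑ c : Fin n,
          (if clR r = i then (1:ℕ) else 0) *
            ((if clC c = j then 1 else 0) * (if clS (L r c) = l then 1 else 0))
        = ∑ r : Fin n, ∑ c : Fin n, ∑ l : Fin (k+1),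
            (if clR r = i then (1:ℕ) else 0) *
              ((if clC c = j then 1 else 0) * (if clS (L r c) = l then 1 else 0)) := by
          rw [Finset.sum_comm]
          exact Finset.sum_congr rfl fun r _ => Finset.sum_comm
      _ = ∑ r : Fin n, ∑ c : Fin n,
            (if clR r = i then (1:ℕ) else 0) * (if clC c = j then 1 else 0) :=
          Finset.sum_congr rfl fun r _ => Finset.sum_congr rfl fun c _ => e1 r c
      _ = (∑ r : Fin n, if clR r = i then (1:ℕ) else 0) *
            (∑ c : Fin n, if clC c = j then (1:ℕ) else 0) := by
          rw [Finset.sum_mul_sum]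
      _ = pp i * pp j := by rw [hRfib i, hCfib j]
  · -- row sums
    intro i l
    have e1 : ∀ r c : Fin n,
        ∑ j : Fin (k+1), (if clR r = i then (1:ℕ) else 0) *
          ((if clC c = j then 1 else 0) * (if clS (L r c) = l then 1 else 0))
        = (if clR r = i then 1 else 0) * (if clS (L r c) = l then 1 else 0) := by
      intro r c
      rw [← Finset.mul_sum]
      congr 1
      rw [← Finset.sum_mul]
      simp [Finset.sum_ite_eq]
    have e2 : ∀ r : Fin n,
        (∑ c : Fin n, if clS (L r c) = l then (1:ℕ) else 0) = pp l := by
      intro r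
      rw [hpp, ← hSfib l]
      exact Fintype.sum_bijective (L r) (hL.1 r) _ _ (fun c => rfl)
    calc ∑ j, ∑ r : Fin n, ∑ c : Fin n,
          (if clR r = i then (1:ℕ) else 0) *
            ((if clC c = j then 1 else 0) * (if clS (L r c) = l then 1 else 0))
        = ∑ r : Fin n, ∑ c : Fin n, ∑ j : Fin (k+1),
            (if clR r = i then (1:ℕ) else 0) *
              ((if clC c = j then 1 else 0) * (if clS (L r c) = l then 1 else 0)) := by
          rw [Finset.sum_comm]
          exact Finset.sum_congr rfl fun r _ => Finset.sum_comm
      _ = ∑ r : Fin n, ∑ c : Fin n,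
            (if clR r = i then (1:ℕ) else 0) * (if clS (L r c) = l then 1 else 0) :=
          Finset.sum_congr rfl fun r _ => Finset.sum_congr rfl fun c _ => e1 r c
      _ = ∑ r : Fin n, (if clR r = i then (1:ℕ) else 0) *
            (∑ c : Fin n, if clS (L r c) = l then (1:ℕ) else 0) := by
          exact Finset.sum_congr rfl fun r _ => (Finset.mul_sum _ _ _).symm
      _ = ∑ r : Fin n, (if clR r = i then (1:ℕ) else 0) * pp l :=
          Finset.sum_congr rfl fun r _ => by rw [e2 r]
      _ = (∑ r : Fin n, if clR r = i then (1:ℕ) else 0) * pp l := by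
          rw [Finset.sum_mul]
      _ = pp i * pp l := by rw [hRfib i]
  · -- column sums
    intro j l
    have e1 : ∀ r c : Fin n,
        ∑ i : Fin (k+1), (if clR r = i then (1:ℕ) else 0) *
          ((if clC c = j then 1 else 0) * (if clS (L r c) = l then 1 else 0))
        = (if clC c = j then 1 else 0) * (if clS (L r c) = l then 1 else 0) := by
      intro r c
      rw [← Finset.sum_mul]
      simp [Finset.sum_ite_eq]
    have e2 : ∀ c : Fin n,
        (∑ r : Fin n, if clS (L r c) = l then (1:ℕ) else 0) = pp l := by
      intro c
      rw [hpp, ← hSfib l]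
      exact Fintype.sum_bijective (fun r => L r c) (hL.2 c) _ _ (fun r => rfl)
    calc ∑ i, ∑ r : Fin n, ∑ c : Fin n,
          (if clR r = i then (1:ℕ) else 0) *
            ((if clC c = j then 1 else 0) * (if clS (L r c) = l then 1 else 0))
        = ∑ r : Fin n, ∑ c : Fin n, ∑ i : Fin (k+1),
            (if clR r = i then (1:ℕ) else 0) *
              ((if clC c = j then 1 else 0) * (if clS (L r c) = l then 1 else 0)) := by
          rw [Finset.sum_comm]
          exact Finset.sum_congr rfl fun r _ => Finset.sum_comm
      _ = ∑ r : Fin n, ∑ c : Fin n,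
            (if clC c = j then (1:ℕ) else 0) * (if clS (L r c) = l then 1 else 0) :=
          Finset.sum_congr rfl fun r _ => Finset.sum_congr rfl fun c _ => e1 r c
      _ = ∑ c : Fin n, ∑ r : Fin n,
            (if clC c = j then (1:ℕ) else 0) * (if clS (L r c) = l then 1 else 0) :=
          Finset.sum_comm
      _ = ∑ c : Fin n, (if clC c = j then (1:ℕ) else 0) *
            (∑ r : Fin n, if clS (L r c) = l then (1:ℕ) else 0) :=
          Finset.sum_congr rfl fun c _ => (Finset.mul_sum _ _ _).symm
      _ = ∑ c : Fin n, (if clC c = j then (1:ℕ) else 0) * pp l :=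
          Finset.sum_congr rfl fun c _ => by rw [e2 c]
      _ = (∑ c : Fin n, if clC c = j then (1:ℕ) else 0) * pp l := by
          rw [Finset.sum_mul]
      _ = pp j * pp l := by rw [hCfib j]
  · -- diagonal condition
    intro a
    have e1 : ∀ r c : Fin n,
        (if clR r = a.castSucc then (1:ℕ) else 0) *
          ((if clC c = a.castSucc then 1 else 0) *
            (if clS (L r c) = a.castSucc then 1 else 0))
        = (if clR r = a.castSucc then 1 else 0) *
            (if clC c = a.castSucc then 1 else 0) := by
      intro r c
      by_cases hr : clR r = a.castSucc
      · by_cases hc : clC c = a.castSucc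
        · have hmem : L r c ∈ S a :=
            hsub a r ((hRiff r a).mp hr) c ((hCiff c a).mp hc)
          have : clS (L r c) = a.castSucc := (hSiff (L r c) a).mpr hmem
          simp [hr, hc, this]
        · simp [hc]
      · simp [hr]
    calc ∑ r : Fin n, ∑ c : Fin n,
          (if clR r = a.castSucc then (1:ℕ) else 0) *
            ((if clC c = a.castSucc then 1 else 0) *
              (if clS (L r c) = a.castSucc then 1 else 0))
        = ∑ r : Fin n, ∑ c : Fin n,
            (if clR r = a.castSucc then (1:ℕ) else 0) *
              (if clC c = a.castSucc then 1 else 0) :=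
          Finset.sum_congr rfl fun r _ => Finset.sum_congr rfl fun c _ => e1 r c
      _ = (∑ r : Fin n, if clR r = a.castSucc then (1:ℕ) else 0) *
            (∑ c : Fin n, if clC c = a.castSucc then (1:ℕ) else 0) := by
          rw [Finset.sum_mul_sum]
      _ = pp a.castSucc * pp a.castSucc := by rw [hRfib, hCfib]
      _ = h a ^ 2 := by
          rw [hpp]
          simp [Fin.snoc_castSucc, sq]

open Finset ILSAux in
/-- The backward direction: an outline square with full diagonal cells yields an ILS. -/
lemma outline_to_ils {n k : ℕ} (h : Fin k → ℕ) (hsum : ∑ i, h i ≤ n)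
    (O : Fin (k+1) → Fin (k+1) → Fin (k+1) → ℕ)
    (hO : IsOutlineSquare (Fin.snoc h (n - ∑ i, h i)) O)
    (hdiag : ∀ i : Fin k, O i.castSucc i.castSucc i.castSucc = (h i) ^ 2) :
    ILS n k h := by
  classical
  obtain ⟨hO1, hO2, hO3⟩ := hO
  set pp : Fin (k+1) → ℕ := Fin.snoc h (n - ∑ i, h i) with hpp
  -- off-class symbols do not occur in the diagonal cells
  have hzero : ∀ (a : Fin k) (l : Fin (k+1)), l ≠ a.castSucc →
      O a.castSucc a.castSucc l = 0 := by
    intro a l hl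
    have h1 : ∑ l', O a.castSucc a.castSucc l' = pp a.castSucc * pp a.castSucc :=
      hO1 a.castSucc a.castSucc
    have h2 : O a.castSucc a.castSucc a.castSucc = pp a.castSucc * pp a.castSucc := by
      rw [hdiag a, hpp]
      simp [Fin.snoc_castSucc, sq]
    have h3 : O a.castSucc a.castSucc a.castSucc
        + ∑ l' ∈ univ.erase a.castSucc, O a.castSucc a.castSucc l'
        = ∑ l', O a.castSucc a.castSucc l' :=
      Finset.add_sum_erase univ _ (mem_univ a.castSucc)
    have h4 : ∑ l' ∈ univ.erase a.castSucc, O a.castSucc a.castSucc l' = 0 := by omega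
    exact Finset.sum_eq_zero_iff.mp h4 l (Finset.mem_erase.mpr ⟨hl, mem_univ l⟩)
  -- Stage 1 : split each row class into individual rows
  have stage1 : ∀ i : Fin (k+1), ∃ N : Fin (pp i) → Fin (k+1) → Fin (k+1) → ℕ,
      (∀ j l, ∑ x, N x j l = O i j l) ∧ (∀ x j, ∑ l, N x j l = pp j) ∧
      (∀ x l, ∑ j, N x j l = pp l) :=
    fun i => decompose (pp i) (O i) pp pp (hO1 i) (fun l => hO2 i l)
  choose N hN1 hN2 hN3 using stage1
  -- Stage 2 : split each column class into individual columns
  have stage2 : ∀ j : Fin (k+1), ∃ CS : Fin (pp j) →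
      (Σ i : Fin (k+1), Fin (pp i)) → Fin (k+1) → ℕ,
      (∀ ρ l, ∑ y, CS y ρ l = N ρ.1 ρ.2 j l) ∧ (∀ y ρ, ∑ l, CS y ρ l = 1) ∧
      (∀ y l, ∑ ρ, CS y ρ l = pp l) := by
    intro j
    refine decompose (pp j) (fun (ρ : Σ i : Fin (k+1), Fin (pp i)) l => N ρ.1 ρ.2 j l)
      (fun _ => 1) pp ?_ ?_
    · intro ρ
      rw [hN2 ρ.1 ρ.2 j, mul_one]
    · intro l
      rw [← Finset.univ_sigma_univ, Finset.sum_sigma]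
      calc ∑ i, ∑ x, N i x j l = ∑ i, O i j l :=
            Finset.sum_congr rfl fun i _ => hN1 i j l
        _ = pp j * pp l := hO3 j l
  choose CS hCS1 hCS2 hCS3 using stage2
  -- Stage 3 : split each symbol class into individual symbols
  have stage3 : ∀ l : Fin (k+1), ∃ SS : Fin (pp l) →
      (Σ i : Fin (k+1), Fin (pp i)) → (Σ i : Fin (k+1), Fin (pp i)) → ℕ,
      (∀ ρ γ, ∑ z, SS z ρ γ = CS γ.1 γ.2 ρ l) ∧ (∀ z ρ, ∑ γ, SS z ρ γ = 1) ∧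
      (∀ z γ, ∑ ρ, SS z ρ γ = 1) := by
    intro l
    refine decompose (pp l)
      (fun (ρ γ : Σ i : Fin (k+1), Fin (pp i)) => CS γ.1 γ.2 ρ l)
      (fun _ => 1) (fun _ => 1) ?_ ?_
    · intro ρ
      rw [← Finset.univ_sigma_univ, Finset.sum_sigma, mul_one]
      calc ∑ j, ∑ y, CS j y ρ l = ∑ j, N ρ.1 ρ.2 j l :=
            Finset.sum_congr rfl fun j _ => hCS1 j ρ l
        _ = pp l := hN3 ρ.1 ρ.2 l
    · intro γ
      rw [mul_one]
      exact hCS3 γ.1 γ.2 l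
  choose SS hSS1 hSS2 hSS3 using stage3
  -- each cell carries exactly one symbol
  have cellsum : ∀ ρ γ : Σ i : Fin (k+1), Fin (pp i),
      ∑ σ : Σ i : Fin (k+1), Fin (pp i), SS σ.1 σ.2 ρ γ = 1 := by
    intro ρ γ
    rw [← Finset.univ_sigma_univ, Finset.sum_sigma]
    calc ∑ l, ∑ z, SS l z ρ γ = ∑ l, CS γ.1 γ.2 ρ l :=
          Finset.sum_congr rfl fun l _ => hSS1 l ρ γ
      _ = 1 := hCS2 γ.1 γ.2 ρ
  have hex : ∀ ρ γ : Σ i : Fin (k+1), Fin (pp i),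
      ∃ σ : Σ i : Fin (k+1), Fin (pp i), 0 < SS σ.1 σ.2 ρ γ :=
    fun ρ γ => pos_of_sum_eq_one _ (cellsum ρ γ)
  choose L0 hL0 using hex
  have huniq : ∀ (ρ γ σ : Σ i : Fin (k+1), Fin (pp i)),
      0 < SS σ.1 σ.2 ρ γ → σ = L0 ρ γ :=
    fun ρ γ σ hσ => eq_of_pos_of_sum_eq_one
      (f := fun σ : Σ i : Fin (k+1), Fin (pp i) => SS σ.1 σ.2 ρ γ)
      (cellsum ρ γ) hσ (hL0 ρ γ)
  -- rows of `L0` are bijections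
  have hrowbij : ∀ ρ, Function.Bijective (L0 ρ) := by
    intro ρ
    constructor
    · intro γ1 γ2 heq
      have p1 : 0 < SS (L0 ρ γ1).1 (L0 ρ γ1).2 ρ γ1 := hL0 ρ γ1
      have p2 : 0 < SS (L0 ρ γ1).1 (L0 ρ γ1).2 ρ γ2 := by
        rw [heq]; exact hL0 ρ γ2
      exact eq_of_pos_of_sum_eq_one
        (f := fun γ => SS (L0 ρ γ1).1 (L0 ρ γ1).2 ρ γ)
        (hSS2 (L0 ρ γ1).1 (L0 ρ γ1).2 ρ) p1 p2
    · intro σ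
      obtain ⟨γ, hγ⟩ := pos_of_sum_eq_one _ (hSS2 σ.1 σ.2 ρ)
      exact ⟨γ, (huniq ρ γ σ hγ).symm⟩
  -- columns of `L0` are bijections
  have hcolbij : ∀ γ, Function.Bijective (fun ρ => L0 ρ γ) := by
    intro γ
    constructor
    · intro ρ1 ρ2 heq
      simp only at heq
      have p1 : 0 < SS (L0 ρ1 γ).1 (L0 ρ1 γ).2 ρ1 γ := hL0 ρ1 γ
      have p2 : 0 < SS (L0 ρ1 γ).1 (L0 ρ1 γ).2 ρ2 γ := by
        rw [heq]; exact hL0 ρ2 γ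
      exact eq_of_pos_of_sum_eq_one
        (f := fun ρ => SS (L0 ρ1 γ).1 (L0 ρ1 γ).2 ρ γ)
        (hSS3 (L0 ρ1 γ).1 (L0 ρ1 γ).2 γ) p1 p2
    · intro σ
      obtain ⟨ρ, hρ⟩ := pos_of_sum_eq_one _ (hSS3 σ.1 σ.2 γ)
      exact ⟨ρ, (huniq ρ γ σ hρ).symm⟩
  -- the symbol class of a cell is bounded by the outline
  have hcb : ∀ ρ γ : Σ i : Fin (k+1), Fin (pp i), 0 < O ρ.1 γ.1 (L0 ρ γ).1 := by
    intro ρ γ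
    have h1 : 0 < SS (L0 ρ γ).1 (L0 ρ γ).2 ρ γ := hL0 ρ γ
    have h2 : SS (L0 ρ γ).1 (L0 ρ γ).2 ρ γ ≤ CS γ.1 γ.2 ρ (L0 ρ γ).1 := by
      rw [← hSS1 (L0 ρ γ).1 ρ γ]
      exact Finset.single_le_sum (f := fun z => SS (L0 ρ γ).1 z ρ γ)
        (fun _ _ => Nat.zero_le _) (mem_univ (L0 ρ γ).2)
    have h3 : CS γ.1 γ.2 ρ (L0 ρ γ).1 ≤ N ρ.1 ρ.2 γ.1 (L0 ρ γ).1 := by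
      rw [← hCS1 γ.1 ρ (L0 ρ γ).1]
      exact Finset.single_le_sum (f := fun y => CS γ.1 y ρ (L0 ρ γ).1)
        (fun _ _ => Nat.zero_le _) (mem_univ γ.2)
    have h4 : N ρ.1 ρ.2 γ.1 (L0 ρ γ).1 ≤ O ρ.1 γ.1 (L0 ρ γ).1 := by
      rw [← hN1 ρ.1 γ.1 (L0 ρ γ).1]
      exact Finset.single_le_sum (f := fun x => N ρ.1 x γ.1 (L0 ρ γ).1)
        (fun _ _ => Nat.zero_le _) (mem_univ ρ.2)
    omega
  have hclass : ∀ (a : Fin k) (ρ γ : Σ i : Fin (k+1), Fin (pp i)),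
      ρ.1 = a.castSucc → γ.1 = a.castSucc → (L0 ρ γ).1 = a.castSucc := by
    intro a ρ γ hρ hγ
    by_contra hne
    have := hcb ρ γ
    rw [hρ, hγ, hzero a _ hne] at this
    exact lt_irrefl 0 this
  -- transfer to `Fin n`
  have hn : ∑ i : Fin (k+1), pp i = n := by
    rw [Fin.sum_univ_castSucc]
    have h1 : ∀ a : Fin k, pp a.castSucc = h a := fun a => by
      rw [hpp]; simp [Fin.snoc_castSucc]
    rw [Finset.sum_congr rfl fun a _ => h1 a]
    have h2 : pp (Fin.last k) = n - ∑ i, h i := by rw [hpp]; simp [Fin.snoc_last]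
    rw [h2]
    have h3 : Finset.univ.sum h = ∑ i, h i := rfl
    omega
  have hcard : Fintype.card (Σ i : Fin (k+1), Fin (pp i)) = Fintype.card (Fin n) := by
    simp [Fintype.card_sigma, hn]
  set e : (Σ i : Fin (k+1), Fin (pp i)) ≃ Fin n := Fintype.equivOfCardEq hcard with he
  refine ⟨fun r c => e (L0 (e.symm r) (e.symm c)), ⟨?_, ?_⟩, ?_⟩
  · intro r
    exact (e.bijective.comp (hrowbij (e.symm r))).comp e.symm.bijective
  · intro c
    exact (e.bijective.comp (hcolbij (e.symm c))).comp e.symm.bijective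
  · -- the subsquares
    refine ⟨fun a => univ.filter fun x => (e.symm x).1 = a.castSucc,
      fun a => univ.filter fun x => (e.symm x).1 = a.castSucc,
      fun a => univ.filter fun x => (e.symm x).1 = a.castSucc, ?_, ?_, ?_⟩
    · intro a
      have hc : (univ.filter fun x : Fin n => (e.symm x).1 = a.castSucc).card = h a := by
        rw [Finset.card_filter]
        have e0 : ∑ x : Fin n, (if (e.symm x).1 = a.castSucc then (1:ℕ) else 0)
            = ∑ ρ : Σ i : Fin (k+1), Fin (pp i),
              (if ρ.1 = a.castSucc then (1:ℕ) else 0) :=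
          Equiv.sum_comp e.symm (fun ρ => if ρ.1 = a.castSucc then (1:ℕ) else 0)
        rw [e0, ← Finset.univ_sigma_univ, Finset.sum_sigma]
        have e3 : ∀ i : Fin (k+1), ∑ _x : Fin (pp i),
            (if i = a.castSucc then (1:ℕ) else 0) = if i = a.castSucc then pp i else 0 := by
          intro i
          by_cases hi : i = a.castSucc <;> simp [hi]
        rw [Finset.sum_congr rfl fun i _ => e3 i]
        rw [Finset.sum_ite_eq' univ a.castSucc pp]
        simp [hpp, Fin.snoc_castSucc]
      exact ⟨hc, hc, hc⟩
    · intro a r hr c hc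
      simp only [Finset.mem_filter, Finset.mem_univ, true_and] at hr hc ⊢
      rw [Equiv.symm_apply_apply]
      exact hclass a (e.symm r) (e.symm c) hr hc
    · intro a b hab
      have hd : Disjoint (univ.filter fun x : Fin n => (e.symm x).1 = a.castSucc)
          (univ.filter fun x : Fin n => (e.symm x).1 = b.castSucc) := by
        rw [Finset.disjoint_left]
        intro x hxa hxb
        simp only [Finset.mem_filter, Finset.mem_univ, true_and] at hxa hxb
        exact hab (Fin.castSucc_injective k (hxa ▸ hxb))
      exact ⟨hd, hd, hd⟩

/-- An `ILS(n; h₁ … h_k)` exists iff there is an outline square associated to the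
partition `(h₁, …, h_k, n - (h₁ + ⋯ + h_k))` of `n` with `O_i(i,i) = h_i²` for `i ∈ [k]`. -/
theorem ils_iff_outline_square (n k : ℕ) (h : Fin k → ℕ)
    (hpos : ∀ i, 0 < h i)
    (hmono : ∀ i j : Fin k, i ≤ j → h j ≤ h i)
    (hsum : ∑ i, h i ≤ n) :
    ILS n k h ↔
      ∃ O : Fin (k + 1) → Fin (k + 1) → Fin (k + 1) → ℕ,
        IsOutlineSquare (Fin.snoc h (n - ∑ i, h i)) O ∧
        ∀ i : Fin k, O i.castSucc i.castSucc i.castSucc = (h i) ^ 2 := by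
  constructor
  · exact fun hILS => ils_to_outline h hILS
  · rintro ⟨O, hO, hdiag⟩
    exact outline_to_ils h hsum O hO hdiag
end

section
/- If an incomplete latin square ILS(n; h_1…h_k) exists (with h_1 ≥ h_2 ≥ … ≥ h_k > 0 and h_1+…+h_k ≤ n), and we set h_{k+1} = n − (h_1+…+h_k), then there exists a symmetric rational outline square associated to the partition P = (h_1,…,h_{k+1}) of n which respects (P, [k]), i.e. an ROS((h_1,…,h_{k+1}), [k]). -/
/-- A rational outline square associated to the partition `p`:
`O i j ℓ` is the (nonnegative rational) multiplicity of symbol `ℓ` in cell `(i,j)`. -/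
def IsRationalOutlineSquare {u : ℕ} (p : Fin u → ℕ) (O : Fin u → Fin u → Fin u → ℚ) : Prop :=
  (∀ i j ℓ, 0 ≤ O i j ℓ) ∧
  (∀ i j, ∑ ℓ, O i j ℓ = (p i : ℚ) * p j) ∧
  (∀ i ℓ, ∑ j, O i j ℓ = (p i : ℚ) * p ℓ) ∧
  (∀ j ℓ, ∑ i, O i j ℓ = (p j : ℚ) * p ℓ)

/-- Symmetric: the value is invariant under every permutation of the three arguments. -/
def IsSymmetricOutline {u : ℕ} (O : Fin u → Fin u → Fin u → ℚ) : Prop :=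
  ∀ i j ℓ, O i j ℓ = O j i ℓ ∧ O i j ℓ = O i ℓ j ∧ O i j ℓ = O ℓ j i ∧
    O i j ℓ = O j ℓ i ∧ O i j ℓ = O ℓ i j

/- ### Auxiliary machinery -/

open Finset

/-- Classifier: which block a point belongs to (last block = "remainder"). -/
noncomputable def clf {n k : ℕ} (F : Fin k → Finset (Fin n)) (x : Fin n) : Fin (k + 1) :=
  if h : ∃ a, x ∈ F a then h.choose.castSucc else Fin.last k

/-- Extend a disjoint family to a partition of `Fin n` by adding the complement block. -/
def blk {n k : ℕ} (F : Fin k → Finset (Fin n)) : Fin (k + 1) → Finset (Fin n) :=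
  Fin.snoc F (Finset.univ.biUnion F)ᶜ

lemma mem_blk_iff {n k : ℕ} {F : Fin k → Finset (Fin n)}
    (hd : ∀ a b : Fin k, a ≠ b → Disjoint (F a) (F b)) (x : Fin n) (ℓ : Fin (k + 1)) :
    x ∈ blk F ℓ ↔ clf F x = ℓ := by
  unfold clf
  by_cases hx : ∃ a, x ∈ F a
  · rw [dif_pos hx]
    have hxc : x ∈ F hx.choose := hx.choose_spec
    refine Fin.lastCases ?_ ?_ ℓ
    · simp only [blk, Fin.snoc_last, Finset.mem_compl, Finset.mem_biUnion]
      constructor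
      · intro hmem; exact absurd ⟨hx.choose, Finset.mem_univ _, hxc⟩ hmem
      · intro heq; exact absurd heq (ne_of_lt (Fin.castSucc_lt_last _))
    · intro b
      simp only [blk, Fin.snoc_castSucc]
      constructor
      · intro hb
        by_contra hne
        have hne' : hx.choose ≠ b := fun e => hne (by rw [e])
        exact (Finset.disjoint_left.mp (hd _ _ hne') hxc) hb
      · intro heq
        have : hx.choose = b := Fin.castSucc_injective _ heq
        rwa [← this]
  · rw [dif_neg hx]
    refine Fin.lastCases ?_ ?_ ℓ
    · simp only [blk, Fin.snoc_last, Finset.mem_compl, Finset.mem_biUnion]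
      constructor
      · intro _; trivial
      · rintro _ ⟨a, _, ha⟩; exact hx ⟨a, ha⟩
    · intro b
      simp only [blk, Fin.snoc_castSucc]
      constructor
      · intro hb; exact absurd ⟨b, hb⟩ hx
      · intro heq; exact absurd heq.symm (ne_of_lt (Fin.castSucc_lt_last _))

lemma blk_eq_filter {n k : ℕ} {F : Fin k → Finset (Fin n)}
    (hd : ∀ a b : Fin k, a ≠ b → Disjoint (F a) (F b)) (ℓ : Fin (k + 1)) :
    blk F ℓ = Finset.univ.filter (fun x => clf F x = ℓ) := by
  ext x
  simp only [Finset.mem_filter, Finset.mem_univ, true_and]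
  exact mem_blk_iff hd x ℓ

lemma sum_blk {n k : ℕ} {F : Fin k → Finset (Fin n)}
    (hd : ∀ a b : Fin k, a ≠ b → Disjoint (F a) (F b))
    {M : Type*} [AddCommMonoid M] (f : Fin n → M) :
    ∑ ℓ, ∑ x ∈ blk F ℓ, f x = ∑ x, f x := by
  have : ∀ ℓ, ∑ x ∈ blk F ℓ, f x = ∑ x ∈ Finset.univ.filter (fun x => clf F x = ℓ), f x :=
    fun ℓ => by rw [blk_eq_filter hd]
  rw [Finset.sum_congr rfl fun ℓ _ => this ℓ]
  exact Finset.sum_fiberwise _ _ _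

lemma sum_ind_blk {n k : ℕ} {F : Fin k → Finset (Fin n)}
    (hd : ∀ a b : Fin k, a ≠ b → Disjoint (F a) (F b)) (x : Fin n) :
    ∑ ℓ, (if x ∈ blk F ℓ then (1 : ℕ) else 0) = 1 := by
  have key : ∀ ℓ, (if x ∈ blk F ℓ then (1 : ℕ) else 0) = (if clf F x = ℓ then 1 else 0) :=
    fun ℓ => if_congr (mem_blk_iff hd x ℓ) rfl rfl
  rw [Finset.sum_congr rfl fun ℓ _ => key ℓ]
  simp

lemma blk_card {n k : ℕ} {F : Fin k → Finset (Fin n)} {h : Fin k → ℕ}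
    (hd : ∀ a b : Fin k, a ≠ b → Disjoint (F a) (F b)) (hc : ∀ a, (F a).card = h a)
    (ℓ : Fin (k + 1)) : (blk F ℓ).card = (Fin.snoc h (n - ∑ i, h i) : Fin (k+1) → ℕ) ℓ := by
  induction ℓ using Fin.lastCases with
  | last =>
    rw [blk, Fin.snoc_last, Fin.snoc_last, Finset.card_compl,
      Finset.card_biUnion (fun a _ b _ hab => hd a b hab)]
    simp [hc]
  | cast a =>
    rw [blk, Fin.snoc_castSucc, Fin.snoc_castSucc, hc]

lemma card_filter_of_bij {n : ℕ} {f : Fin n → Fin n} (hf : Function.Bijective f)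
    (t : Finset (Fin n)) :
    ∑ c, (if f c ∈ t then (1 : ℕ) else 0) = t.card := by
  rw [← Finset.card_filter]
  refine Finset.card_bij (fun c _ => f c) ?_ ?_ ?_
  · intro a ha; exact (Finset.mem_filter.mp ha).2
  · intro a _ b _ hab; exact hf.injective hab
  · intro y hy
    obtain ⟨c, hc⟩ := hf.surjective y
    exact ⟨c, Finset.mem_filter.mpr ⟨Finset.mem_univ _, hc ▸ hy⟩, hc⟩

/-- If an `ILS(n; h₁ … h_k)` exists, then a symmetric rational outline square associated to
the partition `(h₁, …, h_k, n - (h₁ + ⋯ + h_k))` of `n` respecting `(P, [k])` exists. -/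
theorem exists_symmetric_rational_outline_square_of_ils (n k : ℕ) (h : Fin k → ℕ)
    (hpos : ∀ i, 0 < h i)
    (hmono : ∀ i j : Fin k, i ≤ j → h j ≤ h i)
    (hsum : ∑ i, h i ≤ n)
    (hILS : ILS n k h) :
    ∃ O : Fin (k + 1) → Fin (k + 1) → Fin (k + 1) → ℚ,
      IsRationalOutlineSquare (Fin.snoc h (n - ∑ i, h i)) O ∧
      IsSymmetricOutline O ∧
      ∀ i : Fin k, O i.castSucc i.castSucc i.castSucc = (h i : ℚ) ^ 2 := by
  classical
  obtain ⟨L, ⟨hrow, hcol⟩, R, C, S, hcards, hsub, hdisj⟩ := hILS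
  have hdR : ∀ a b : Fin k, a ≠ b → Disjoint (R a) (R b) := fun a b hab => (hdisj a b hab).1
  have hdC : ∀ a b : Fin k, a ≠ b → Disjoint (C a) (C b) := fun a b hab => (hdisj a b hab).2.1
  have hdS : ∀ a b : Fin k, a ≠ b → Disjoint (S a) (S b) := fun a b hab => (hdisj a b hab).2.2
  set p : Fin (k + 1) → ℕ := Fin.snoc h (n - ∑ i, h i) with hp
  have hpR : ∀ ℓ, (blk R ℓ).card = p ℓ := blk_card hdR (fun a => (hcards a).1)
  have hpC : ∀ ℓ, (blk C ℓ).card = p ℓ := blk_card hdC (fun a => (hcards a).2.1)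
  have hpS : ∀ ℓ, (blk S ℓ).card = p ℓ := blk_card hdS (fun a => (hcards a).2.2)
  set T : Fin (k + 1) → Fin (k + 1) → Fin (k + 1) → ℕ :=
    fun i j ℓ => ∑ r ∈ blk R i, ∑ c ∈ blk C j, (if L r c ∈ blk S ℓ then 1 else 0) with hT
  -- sum over last coordinate
  have hA : ∀ i j, ∑ ℓ, (T i j ℓ : ℚ) = (p i : ℚ) * p j := by
    intro i j
    have : ∑ ℓ, T i j ℓ = p i * p j := by
      calc ∑ ℓ, T i j ℓ
          = ∑ r ∈ blk R i, ∑ c ∈ blk C j, ∑ ℓ, (if L r c ∈ blk S ℓ then 1 else 0) := by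
            rw [Finset.sum_comm]
            exact Finset.sum_congr rfl fun r _ => Finset.sum_comm
        _ = ∑ r ∈ blk R i, ∑ c ∈ blk C j, 1 := by
            exact Finset.sum_congr rfl fun r _ =>
              Finset.sum_congr rfl fun c _ => sum_ind_blk hdS _
        _ = p i * p j := by simp [hpR, hpC, mul_comm]
    rw [← Nat.cast_sum, this, Nat.cast_mul]
  -- sum over middle coordinate
  have hB : ∀ i j, ∑ x, (T i x j : ℚ) = (p i : ℚ) * p j := by
    intro i j
    have : ∑ x, T i x j = p i * p j := by
      calc ∑ x, T i x j
          = ∑ r ∈ blk R i, ∑ x, ∑ c ∈ blk C x, (if L r c ∈ blk S j then 1 else 0) :=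
            Finset.sum_comm
        _ = ∑ r ∈ blk R i, ∑ c, (if L r c ∈ blk S j then 1 else 0) :=
            Finset.sum_congr rfl fun r _ => sum_blk hdC _
        _ = ∑ r ∈ blk R i, (blk S j).card :=
            Finset.sum_congr rfl fun r _ => card_filter_of_bij (hrow r) _
        _ = p i * p j := by simp [hpR, hpS, mul_comm]
    rw [← Nat.cast_sum, this, Nat.cast_mul]
  -- sum over first coordinate
  have hC : ∀ i j, ∑ x, (T x i j : ℚ) = (p i : ℚ) * p j := by
    intro i j
    have : ∑ x, T x i j = p i * p j := by
      calc ∑ x, T x i j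
          = ∑ x, ∑ c ∈ blk C i, ∑ r ∈ blk R x, (if L r c ∈ blk S j then 1 else 0) :=
            Finset.sum_congr rfl fun x _ => Finset.sum_comm
        _ = ∑ c ∈ blk C i, ∑ x, ∑ r ∈ blk R x, (if L r c ∈ blk S j then 1 else 0) :=
            Finset.sum_comm
        _ = ∑ c ∈ blk C i, ∑ r, (if L r c ∈ blk S j then 1 else 0) :=
            Finset.sum_congr rfl fun c _ => sum_blk hdR _
        _ = ∑ c ∈ blk C i, (blk S j).card :=
            Finset.sum_congr rfl fun c _ => card_filter_of_bij (hcol c) _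
        _ = p i * p j := by simp [hpC, hpS, mul_comm]
    rw [← Nat.cast_sum, this, Nat.cast_mul]
  have hDiag : ∀ a : Fin k, T a.castSucc a.castSucc a.castSucc = h a * h a := by
    intro a
    have h1 : blk R a.castSucc = R a := by rw [blk, Fin.snoc_castSucc]
    have h2 : blk C a.castSucc = C a := by rw [blk, Fin.snoc_castSucc]
    have h3 : blk S a.castSucc = S a := by rw [blk, Fin.snoc_castSucc]
    calc T a.castSucc a.castSucc a.castSucc
        = ∑ r ∈ R a, ∑ c ∈ C a, (if L r c ∈ S a then 1 else 0) := by
          simp only [hT, h1, h2, h3]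
      _ = ∑ r ∈ R a, ∑ c ∈ C a, 1 := by
          refine Finset.sum_congr rfl fun r hr => Finset.sum_congr rfl fun c hc => ?_
          rw [if_pos (hsub a r hr c hc)]
      _ = h a * h a := by simp [(hcards a).1, (hcards a).2.1]
  refine ⟨fun i j ℓ =>
    ((T i j ℓ : ℚ) + T j i ℓ + T i ℓ j + T ℓ j i + T j ℓ i + T ℓ i j) / 6,
    ⟨?_, ?_, ?_, ?_⟩, ?_, ?_⟩
  · intro i j ℓ; positivity
  · intro i j
    rw [← Finset.sum_div]
    simp only [Finset.sum_add_distrib]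
    rw [hA i j, hA j i, hB i j, hC j i, hB j i, hC i j]
    ring
  · intro i ℓ
    rw [← Finset.sum_div]
    simp only [Finset.sum_add_distrib]
    rw [hB i ℓ, hC i ℓ, hA i ℓ, hB ℓ i, hC ℓ i, hA ℓ i]
    ring
  · intro j ℓ
    rw [← Finset.sum_div]
    simp only [Finset.sum_add_distrib]
    rw [hC j ℓ, hB j ℓ, hC ℓ j, hA j ℓ, hA ℓ j, hB ℓ j]
    ring
  · intro i j ℓ
    refine ⟨by ring, by ring, by ring, by ring, by ring⟩
  · intro a
    have := hDiag a
    push_cast [this]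
    ring
end

section
/- For positive integers h_1 and n, an incomplete latin square ILS(n; h_1²) (a latin square of order n with two pairwise disjoint subsquares each of order h_1) exists if and only if n ≥ 3·h_1. -/
/-!
Necessity: a row of the second subsquare meets the columns of the first one in `h` distinct
symbols lying outside both symbol sets, so `h ≤ n - 2h`.

Sufficiency: for `n = 2h + m` with `m ≥ h` an explicit `2h × n` latin rectangle, pieced together
from cyclic blocks, contains subsquares on `[0, h)²` and `[h, 2h)²`; by Hall's marriage theorem
every latin rectangle completes, row by row, to a latin square.
-/

open Finset Function

theorem Finset.mem_of_mapsTo_of_card_le {α β : Type*} {f : α → β} (hf : Injective f)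
    {s : Finset α} {t : Finset β} (hst : Set.MapsTo f s t) (hcard : #t ≤ #s) {a : α}
    (ha : f a ∈ t) : a ∈ s := by
  obtain ⟨b, hb, hba⟩ := surjOn_of_injOn_of_card_le f hst hf.injOn hcard ha
  exact hf hba ▸ hb

theorem Finset.exists_injective_forall_mem_of_degree_le {ι β : Type*} [Fintype ι]
    [DecidableEq β] (t : ι → Finset β) {d : ℕ} (hd : 0 < d) (ht : ∀ i, d ≤ #(t i))
    (hdeg : ∀ b, #{i | b ∈ t i} ≤ d) : ∃ f : ι → β, Injective f ∧ ∀ i, f i ∈ t i := by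
  refine (all_card_le_biUnion_card_iff_exists_injective t).mp fun T ↦ ?_
  refine Nat.le_of_mul_le_mul_right (card_mul_le_card_mul (fun i b ↦ b ∈ t i) (fun i hi ↦ ?_)
    fun b _ ↦ ?_) hd
  · rw [bipartiteAbove, filter_mem_eq_inter, inter_eq_right.mpr (subset_biUnion_of_mem t hi)]
    exact ht i
  · exact (card_le_card (filter_subset_filter _ (subset_univ T))).trans (hdeg b)

theorem Nat.mod_eq_ite_of_lt_two_mul {x k : ℕ} (hx : x < 2 * k) :
    x % k = if x < k then x else x - k := by
  split_ifs with h
  · exact Nat.mod_eq_of_lt h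
  · rw [Nat.mod_eq_sub_mod (not_lt.mp h), Nat.mod_eq_of_lt (by omega)]

namespace IsLatinSquare

variable {n : ℕ} {L : Fin n → Fin n → Fin n}

theorem of_injective (hrow : ∀ i, Injective (L i)) (hcol : ∀ j, Injective (L · j)) :
    IsLatinSquare L :=
  ⟨fun i ↦ (hrow i).bijective_of_finite, fun j ↦ (hcol j).bijective_of_finite⟩

/-- In a latin rectangle with `#F` rows every column misses `n - #F` symbols and every symbol is
missing from `n - #F` columns, so Hall's condition holds. -/
theorem exists_injective_forall_ne_of_injOn (F : Finset (Fin n)) (L : Fin n → Fin n → Fin n)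
    (hrow : ∀ i ∈ F, Injective (L i)) (hcol : ∀ j, Set.InjOn (L · j) F) {i₀ : Fin n}
    (hi₀ : i₀ ∉ F) : ∃ r : Fin n → Fin n, Injective r ∧ ∀ j, ∀ i ∈ F, r j ≠ L i j := by
  set t : Fin n → Finset (Fin n) := fun j ↦ (F.image (L · j))ᶜ
  have hlt : #F < n := by simpa using card_lt_univ_of_notMem hi₀
  have : NeZero n := ⟨by omega⟩
  have ht : ∀ j, n - #F ≤ #(t j) := fun j ↦ by
    rw [card_compl, Fintype.card_fin]
    exact Nat.sub_le_sub_left card_image_le n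
  have hdeg : ∀ s, #{j | s ∈ t j} ≤ n - #F := fun s ↦ by
    have hpos : ∀ i ∈ F, L i (invFun (L i) s) = s := fun i hi ↦
      invFun_eq (Finite.surjective_of_injective (hrow i hi) s)
    have hcover : #F ≤ #{j | s ∉ t j} := by
      refine card_le_card_of_injOn (fun i ↦ invFun (L i) s) (fun i hi ↦ ?_) fun i hi i' hi' e ↦ ?_
      · simpa [t] using ⟨i, hi, hpos i hi⟩
      · exact hcol (invFun (L i) s) hi hi' (by simp only at e ⊢; rw [hpos i hi, e, hpos i' hi'])
    have := card_filter_add_card_filter_not (s := univ) (fun j ↦ s ∈ t j)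
    simp only [card_univ, Fintype.card_fin] at this
    omega
  obtain ⟨r, hr, hmem⟩ := exists_injective_forall_mem_of_degree_le t (by omega) ht hdeg
  exact ⟨r, hr, fun j i hi hri ↦ mem_compl.mp (hmem j) (hri ▸ mem_image_of_mem _ hi)⟩

theorem exists_of_injOn (F : Finset (Fin n)) (L : Fin n → Fin n → Fin n)
    (hrow : ∀ i ∈ F, Injective (L i)) (hcol : ∀ j, Set.InjOn (L · j) F) :
    ∃ L' : Fin n → Fin n → Fin n, IsLatinSquare L' ∧ ∀ i ∈ F, L' i = L i := by
  obtain ⟨k, hk⟩ : ∃ k, #Fᶜ = k := ⟨_, rfl⟩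
  induction k generalizing F L with
  | zero =>
    obtain rfl : F = univ := by simpa using hk
    exact ⟨L, .of_injective (fun i ↦ hrow i (mem_univ i)) (fun j ↦ by simpa using hcol j),
      fun _ _ ↦ rfl⟩
  | succ k ih =>
    obtain ⟨i₀, hi₀⟩ : ∃ i₀, i₀ ∉ F := by
      simpa using (card_pos.mp (by omega : 0 < #Fᶜ)).exists_mem
    obtain ⟨r, hr, hne⟩ := exists_injective_forall_ne_of_injOn F L hrow hcol hi₀
    have hupd : ∀ i ∈ F, update L i₀ r i = L i := fun i hi ↦
      update_of_ne (ne_of_mem_of_not_mem hi hi₀) _ _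
    have hrow' : ∀ i ∈ insert i₀ F, Injective (update L i₀ r i) := fun i hi ↦ by
      rcases mem_insert.mp hi with rfl | hi
      · simpa using hr
      · simpa [hupd i hi] using hrow i hi
    have hcol' : ∀ j, Set.InjOn (update L i₀ r · j) ↑(insert i₀ F) := fun j ↦ by
      rw [coe_insert, Set.injOn_insert (by simpa using hi₀)]
      refine ⟨fun i hi i' hi' e ↦ hcol j hi hi' (by simpa [hupd i hi, hupd i' hi'] using e), ?_⟩
      rintro ⟨i, hi, e⟩
      exact hne j i hi (by simpa [hupd i hi] using e.symm)
    have hk' : #(insert i₀ F)ᶜ = k := by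
      rw [compl_insert, card_erase_of_mem (by simpa using hi₀), hk, Nat.add_sub_cancel]
    obtain ⟨L', hL', hagree⟩ := ih (insert i₀ F) (update L i₀ r) hrow' hcol' hk'
    exact ⟨L', hL', fun i hi ↦ (hagree i (mem_insert_of_mem hi)).trans (hupd i hi)⟩

/-- Row `i` of the second subsquare meets the columns of the first one in `#C₀` distinct symbols,
none of which lies in `S₀` (column-wise those sit in the rows `R₀`) or in `S₁` (row-wise those sit
in the columns `C₁`). -/
theorem card_add_card_add_card_le (hL : IsLatinSquare L)
    {R₀ C₀ S₀ R₁ C₁ S₁ : Finset (Fin n)} (hL₀ : ∀ i ∈ R₀, ∀ j ∈ C₀, L i j ∈ S₀)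
    (hL₁ : ∀ i ∈ R₁, ∀ j ∈ C₁, L i j ∈ S₁) (hS₀ : #S₀ ≤ #R₀) (hS₁ : #S₁ ≤ #C₁)
    (hR : Disjoint R₀ R₁) (hC : Disjoint C₀ C₁) (hS : Disjoint S₀ S₁) (hR₁ : R₁.Nonempty) :
    #C₀ + #S₀ + #S₁ ≤ n := by
  obtain ⟨i, hi⟩ := hR₁
  have hmaps : Set.MapsTo (L i) C₀ ↑(S₀ ∪ S₁)ᶜ := fun j hj ↦ by
    simp only [coe_compl, coe_union, Set.mem_compl_iff, Set.mem_union, mem_coe, not_or]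
    refine ⟨fun h ↦ disjoint_left.mp hR ?_ hi, fun h ↦ disjoint_left.mp hC hj ?_⟩
    · exact mem_of_mapsTo_of_card_le (hL.2 j).1 (fun i' hi' ↦ hL₀ i' hi' j hj) hS₀ h
    · exact mem_of_mapsTo_of_card_le (hL.1 i).1 (fun j' hj' ↦ hL₁ i hi j' hj') hS₁ h
  have hC₀ := card_le_card_of_injOn (L i) hmaps (hL.1 i).1.injOn
  have hunion := card_le_univ (S₀ ∪ S₁)
  rw [card_compl] at hC₀
  rw [card_union_of_disjoint hS, Fintype.card_fin] at hC₀ hunion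
  omega

end IsLatinSquare

theorem ils_two_of_diagonal {n h : ℕ} {L : Fin n → Fin n → Fin n} (hL : IsLatinSquare L)
    {X₀ X₁ : Finset (Fin n)} (h₀ : #X₀ = h) (h₁ : #X₁ = h) (hX : Disjoint X₀ X₁)
    (hL₀ : ∀ i ∈ X₀, ∀ j ∈ X₀, L i j ∈ X₀) (hL₁ : ∀ i ∈ X₁, ∀ j ∈ X₁, L i j ∈ X₁) :
    ILS n 2 (fun _ ↦ h) :=
  ⟨L, hL, ![X₀, X₁], ![X₀, X₁], ![X₀, X₁], by simp [Fin.forall_fin_two, h₀, h₁],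
    by simpa [Fin.forall_fin_two] using ⟨hL₀, hL₁⟩, by simp [Fin.forall_fin_two, hX, hX.symm]⟩

theorem three_mul_le_of_ils_two {n h : ℕ} (hILS : ILS n 2 (fun _ ↦ h)) : 3 * h ≤ n := by
  obtain ⟨L, hL, R, C, S, hcard, hsub, hdisj⟩ := hILS
  obtain ⟨hR, hC, hS⟩ := hdisj 0 1 (by decide)
  rcases (R 1).eq_empty_or_nonempty with hR₁ | hR₁
  · simp [← (hcard 1).1, hR₁]
  have := hL.card_add_card_add_card_le (hsub 0) (hsub 1)
    ((hcard 0).2.2.trans (hcard 0).1.symm).le ((hcard 1).2.2.trans (hcard 1).2.1.symm).le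
    hR hC hS hR₁
  simp only [hcard] at this
  omega

/-!
A `2h × (2h + m)` latin rectangle, `h ≤ m`, with subsquares on `[0, h)²` and `[h, 2h)²`. Write
`n = 2h + m`. The upper rows fill the first `h` columns cyclically with `[0, h)`, the next `h`
with `[2h, 3h)` and the last `m` cyclically (mod `m`) with `[h, 2h) ∪ [3h, n)`; the lower rows
use `[n - h, n)`, `[h, 2h)` and `[0, h) ∪ [2h, n - h)` instead. In the last `m` columns the two
halves share only the symbols of `[3h, n - h)`, which sit `h` steps apart on the two cycles and
hence never in the same column.
-/
namespace TwoSubsquares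

def upperRow (h m i j : ℕ) : ℕ :=
  if j < h then (i + j) % h
  else if j < 2 * h then 2 * h + (i + j - h) % h
  else if (i + j - 2 * h) % m < h then h + (i + j - 2 * h) % m
  else 2 * h + (i + j - 2 * h) % m

def lowerRow (h m i j : ℕ) : ℕ :=
  if j < h then h + m + (i + j) % h
  else if j < 2 * h then h + (i + j - h) % h
  else if (i + j - 2 * h) % m < h then (i + j - 2 * h) % m
  else h + (i + j - 2 * h) % m

def rect (h m i j : ℕ) : ℕ :=
  if i < h then upperRow h m i j else lowerRow h m (i - h) j

variable {h m i i' j j' : ℕ}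

theorem rect_lt (hm : h ≤ m) (hi : i < 2 * h) (hj : j < 2 * h + m) :
    rect h m i j < 2 * h + m := by
  unfold rect upperRow lowerRow
  split_ifs <;> simp (disch := omega) only [Nat.mod_eq_ite_of_lt_two_mul] at * <;>
    split_ifs at * <;> omega

theorem rect_row_inj (hm : h ≤ m) (hi : i < 2 * h) (hj : j < 2 * h + m) (hj' : j' < 2 * h + m)
    (e : rect h m i j = rect h m i j') : j = j' := by
  unfold rect upperRow lowerRow at e
  split_ifs at e <;> simp (disch := omega) only [Nat.mod_eq_ite_of_lt_two_mul] at * <;>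
    split_ifs at * <;> omega

theorem rect_col_inj (hm : h ≤ m) (hi : i < 2 * h) (hi' : i' < 2 * h) (hj : j < 2 * h + m)
    (e : rect h m i j = rect h m i' j) : i = i' := by
  unfold rect upperRow lowerRow at e
  split_ifs at e <;> simp (disch := omega) only [Nat.mod_eq_ite_of_lt_two_mul] at * <;>
    split_ifs at * <;> omega

theorem rect_lt_of_lt (hi : i < h) (hj : j < h) : rect h m i j < h := by
  simp only [rect, upperRow, if_pos hi, if_pos hj]
  exact Nat.mod_lt _ (by omega)

theorem rect_mem_Ico (hi : h ≤ i) (hj : h ≤ j) (hj' : j < 2 * h) :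
    h ≤ rect h m i j ∧ rect h m i j < 2 * h := by
  simp only [rect, lowerRow, if_neg (not_lt.mpr hi), if_neg (not_lt.mpr hj), if_pos hj']
  have := Nat.mod_lt (i - h + j - h) (by omega : 0 < h)
  omega

end TwoSubsquares

open TwoSubsquares in
theorem ils_two_of_le {h m : ℕ} (hm : h ≤ m) : ILS (2 * h + m) 2 (fun _ ↦ h) := by
  set n := 2 * h + m
  let L : Fin n → Fin n → Fin n := fun i j ↦
    if hi : (i : ℕ) < 2 * h then ⟨rect h m i j, rect_lt hm hi j.2⟩ else j
  have hL : ∀ i j : Fin n, (i : ℕ) < 2 * h → (L i j : ℕ) = rect h m i j :=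
    fun i j hi ↦ by simp [L, hi]
  obtain ⟨L', hL', hagree⟩ := IsLatinSquare.exists_of_injOn {i | (i : ℕ) < 2 * h} L
    (fun i hi j j' e ↦ by
      replace hi : (i : ℕ) < 2 * h := by simpa using hi
      exact Fin.ext (rect_row_inj hm hi j.2 j'.2 (by rw [← hL i j hi, ← hL i j' hi, e])))
    (fun j i hi i' hi' e ↦ by
      replace hi : (i : ℕ) < 2 * h := by simpa using hi
      replace hi' : (i' : ℕ) < 2 * h := by simpa using hi'
      exact Fin.ext (rect_col_inj hm hi hi' j.2
        (by rw [← hL i j hi, ← hL i' j hi']; exact congrArg Fin.val e)))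
  have hL'L : ∀ i j : Fin n, (i : ℕ) < 2 * h → (L' i j : ℕ) = rect h m i j :=
    fun i j hi ↦ by rw [hagree i (by simpa using hi), hL i j hi]
  refine ils_two_of_diagonal hL'
    (X₀ := (range h).attachFin fun k hk ↦ by rw [mem_range] at hk; omega)
    (X₁ := (Ico h (2 * h)).attachFin fun k hk ↦ by rw [mem_Ico] at hk; omega)
    (by simp) (by simp; omega) ?_ ?_ ?_
  · simp only [disjoint_left, mem_attachFin, mem_range, mem_Ico]
    omega
  · simp only [mem_attachFin, mem_range]
    intro i hi j hj
    rw [hL'L i j (by omega)]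
    exact rect_lt_of_lt hi hj
  · simp only [mem_attachFin, mem_Ico]
    intro i hi j hj
    rw [hL'L i j hi.2]
    exact rect_mem_Ico hi.1 hj.1 hj.2

theorem ils_two_equal_subsquares_general (n h₁ : ℕ) :
    ILS n 2 (fun _ => h₁) ↔ 3 * h₁ ≤ n := by
  refine ⟨three_mul_le_of_ils_two, fun hn ↦ ?_⟩
  obtain ⟨m, rfl⟩ : ∃ m, n = 2 * h₁ + m := ⟨n - 2 * h₁, by omega⟩
  exact ils_two_of_le (by omega)

/-- For positive integers `h₁` and `n`, an `ILS(n; h₁²)` exists iff `n ≥ 3h₁`. -/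
theorem ils_two_equal_subsquares (n h₁ : ℕ) (h1pos : 0 < h₁) (npos : 0 < n) :
    ILS n 2 (fun _ => h₁) ↔ 3 * h₁ ≤ n :=
  ils_two_equal_subsquares_general n h₁
end

section
/- Let r, h_1, h_2 be integers with r even, 1 ≤ h_2 ≤ r/4 and 2·h_2 ≤ h_1 ≤ r + 1 − 2·h_2. Then there exists a partial latin square L of order r (rows, columns and symbols indexed by residues modulo r, with residues taken in {1,…,r}) whose filled cells are the disjoint union of r − h_1 transversals, such that: (i) every cell (i,j) with j ⊖ i ∈ {2ℓ−1 : ℓ ∈ [h_2]} ∪ {r+1−2ℓ : ℓ ∈ [h_2]} is empty (where ⊖ denotes subtraction modulo r); and (ii) the cells (i,j) with j ⊖ i ∈ {2ℓ : ℓ ∈ [h_2 − 1]} ∪ {r+2−2ℓ : ℓ ∈ [h_2]} form transversals, where for every i and every d with 0 ≤ d ≤ h_2 − 1, L(i, i ⊕ 2d) = L(i ⊕ 2d, i) = i ⊕ d (where ⊕ denotes addition modulo r). -/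
namespace CPLS

/-- symbol-offset function on differences (as naturals in `[0, 2q)`). -/
def G (q h₂ e o x : ℕ) : Option ℕ :=
  if x % 2 = 0 then
    if x / 2 < h₂ then some (x / 2)
    else if x / 2 < h₂ + e ∨ (q - h₂ + 1 ≤ x / 2 ∧ x / 2 < q) then some (x / 2 + q)
    else none
  else
    if h₂ ≤ x / 2 ∧ x / 2 < h₂ + o then some (x / 2) else none

/-- enumeration of the domain of `G`. -/
def dfun (q h₂ e o m : ℕ) : ℕ :=
  if m < h₂ + e then 2 * m
  else if m < h₂ + e + o then 2 * (m - e) + 1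
  else 2 * q - 2 * (m - (h₂ + e + o) + 1)

variable {q h₂ e o : ℕ}

theorem G_some {x a : ℕ} (h : G q h₂ e o x = some a) :
    (a < h₂ ∧ x = 2 * a) ∨
    (∃ u, x = 2 * u ∧ a = u + q ∧ h₂ ≤ u ∧ (u < h₂ + e ∨ (q - h₂ + 1 ≤ u ∧ u < q))) ∨
    (h₂ ≤ a ∧ a < h₂ + o ∧ x = 2 * a + 1) := by
  unfold G at h
  split_ifs at h with h1 h2 h3 h4 <;> simp only [Option.some.injEq] at h
  · left; omega
  · right; left; exact ⟨x / 2, by omega, by omega, by omega, by omega⟩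
  · right; right; omega

theorem G_lt (hh : 1 ≤ h₂) (hq : 2 * h₂ ≤ q) (ho : o ≤ q - 2 * h₂)
    (he : h₂ + e ≤ q - h₂ + 1) {x a : ℕ} (h : G q h₂ e o x = some a) : x < 2 * q := by
  rcases G_some h with ⟨h1, h2⟩ | ⟨u, h1, h2, h3, h4⟩ | ⟨h1, h2, h3⟩ <;> omega

theorem G_val_lt (hh : 1 ≤ h₂) (hq : 2 * h₂ ≤ q) (ho : o ≤ q - 2 * h₂)
    (he : h₂ + e ≤ q - h₂ + 1) {x a : ℕ} (h : G q h₂ e o x = some a) : a < 2 * q := by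
  rcases G_some h with ⟨h1, h2⟩ | ⟨u, h1, h2, h3, h4⟩ | ⟨h1, h2, h3⟩ <;> omega

theorem G_inj (hh : 1 ≤ h₂) (hq : 2 * h₂ ≤ q) (ho : o ≤ q - 2 * h₂)
    (he : h₂ + e ≤ q - h₂ + 1) {x y a : ℕ}
    (hx : G q h₂ e o x = some a) (hy : G q h₂ e o y = some a) : x = y := by
  rcases G_some hx with ⟨h1, h2⟩ | ⟨u, h1, h2, h3, h4⟩ | ⟨h1, h2, h3⟩ <;>
    rcases G_some hy with ⟨g1, g2⟩ | ⟨v, g1, g2, g3, g4⟩ | ⟨g1, g2, g3⟩ <;> omega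

theorem G_even_small {u : ℕ} (h : u < h₂) : G q h₂ e o (2 * u) = some u := by
  unfold G
  rw [if_pos (by omega), if_pos (by omega)]
  congr 1; omega

theorem G_even_big {u : ℕ} (h1 : h₂ ≤ u)
    (h2 : u < h₂ + e ∨ (q - h₂ + 1 ≤ u ∧ u < q)) :
    G q h₂ e o (2 * u) = some (u + q) := by
  unfold G
  rw [if_pos (by omega), if_neg (by omega), if_pos (by omega)]
  congr 1; omega

theorem G_odd {u : ℕ} (h1 : h₂ ≤ u) (h2 : u < h₂ + o) :
    G q h₂ e o (2 * u + 1) = some u := by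
  unfold G
  rw [if_neg (by omega), if_pos (by omega)]
  congr 1; omega

theorem G_odd_none {x : ℕ} (h1 : x % 2 = 1) (h2 : x / 2 < h₂ ∨ h₂ + o ≤ x / 2) :
    G q h₂ e o x = none := by
  unfold G
  rw [if_neg (by omega), if_neg (by omega)]

theorem dfun_some (hh : 1 ≤ h₂) (hq : 2 * h₂ ≤ q) (ho : o ≤ q - 2 * h₂)
    (he : h₂ + e ≤ q - h₂ + 1) {m : ℕ} (hm : m < (h₂ + e) + o + (h₂ - 1)) :
    ∃ a, G q h₂ e o (dfun q h₂ e o m) = some a := by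
  unfold dfun
  split_ifs with h1 h2
  · rcases Nat.lt_or_ge m h₂ with h | h
    · exact ⟨m, G_even_small h⟩
    · exact ⟨m + q, G_even_big h (Or.inl h1)⟩
  · refine ⟨m - e, G_odd (by omega) (by omega)⟩
  · have : 2 * q - 2 * (m - (h₂ + e + o) + 1) = 2 * (q - (m - (h₂ + e + o) + 1)) := by omega
    rw [this]
    exact ⟨_, G_even_big (by omega) (Or.inr (by omega))⟩

theorem dfun_inj (hh : 1 ≤ h₂) (hq : 2 * h₂ ≤ q) (ho : o ≤ q - 2 * h₂)
    (he : h₂ + e ≤ q - h₂ + 1) {m m' : ℕ} (hm : m < (h₂ + e) + o + (h₂ - 1))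
    (hm' : m' < (h₂ + e) + o + (h₂ - 1)) (h : dfun q h₂ e o m = dfun q h₂ e o m') :
    m = m' := by
  unfold dfun at h
  split_ifs at h <;> omega

theorem dfun_surj (hh : 1 ≤ h₂) (hq : 2 * h₂ ≤ q) (ho : o ≤ q - 2 * h₂)
    (he : h₂ + e ≤ q - h₂ + 1) {x a : ℕ} (h : G q h₂ e o x = some a) :
    ∃ m < (h₂ + e) + o + (h₂ - 1), dfun q h₂ e o m = x := by
  rcases G_some h with ⟨h1, h2⟩ | ⟨u, h1, h2, h3, h4⟩ | ⟨h1, h2, h3⟩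
  · exact ⟨a, by omega, by unfold dfun; rw [if_pos (by omega)]; omega⟩
  · rcases h4 with h4 | ⟨h4, h5⟩
    · exact ⟨u, by omega, by unfold dfun; rw [if_pos (by omega)]; omega⟩
    · refine ⟨(h₂ + e) + o + (q - u) - 1, by omega, ?_⟩
      unfold dfun
      rw [if_neg (by omega), if_neg (by omega)]
      omega
  · exact ⟨e + a, by omega, by unfold dfun; rw [if_neg (by omega), if_pos (by omega)]; omega⟩

theorem cast_sub_eq {r : ℕ} (w : ℕ) (hw : w ≤ r) : ((r - w : ℕ) : ZMod r) = -(w : ZMod r) := by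
  rw [Nat.cast_sub hw, ZMod.natCast_self, zero_sub]

theorem G_sub (hh : 1 ≤ h₂) (hq : 2 * h₂ ≤ q) (ho : o ≤ q - 2 * h₂)
    (he : h₂ + e ≤ q - h₂ + 1) {x a : ℕ} (h : G q h₂ e o x = some a) :
    ∃ v < 2 * q, ((a : ZMod (2*q)) - (x : ZMod (2*q)) = (v : ZMod (2*q))) ∧
      ((v = 0 ∧ x = 0) ∨ (2 * q - h₂ < v ∧ v < 2 * q ∧ x = 2 * (2 * q - v)) ∨
       (1 ≤ v ∧ v ≤ q - h₂ ∧ x = 2 * (q - v)) ∨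
       (q + h₂ ≤ v ∧ v < 2 * q - h₂ ∧ x = 4 * q - 2 * v - 1)) := by
  rcases G_some h with ⟨h1, h2⟩ | ⟨u, h1, h2, h3, h4⟩ | ⟨h1, h2, h3⟩
  · rcases Nat.eq_zero_or_pos a with rfl | ha
    · exact ⟨0, by omega, by subst h2; simp, Or.inl ⟨rfl, by omega⟩⟩
    · refine ⟨2 * q - a, by omega, ?_, Or.inr (Or.inl ⟨by omega, by omega, by omega⟩)⟩
      rw [cast_sub_eq a (by omega)]
      subst h2; push_cast; ring
  · refine ⟨q - u, by omega, ?_, Or.inr (Or.inr (Or.inl ⟨by omega, by omega, by omega⟩))⟩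
    subst h1 h2
    have : ((q - u : ℕ) : ZMod (2*q)) = (q : ZMod (2*q)) - u := by
      rw [Nat.cast_sub (by omega)]
    rw [this]; push_cast; ring
  · refine ⟨2 * q - (a + 1), by omega, ?_, Or.inr (Or.inr (Or.inr ⟨by omega, by omega, by omega⟩))⟩
    rw [cast_sub_eq (a + 1) (by omega)]
    subst h3; push_cast; ring

theorem G_sub_inj (hh : 1 ≤ h₂) (hq : 2 * h₂ ≤ q) (ho : o ≤ q - 2 * h₂)
    (he : h₂ + e ≤ q - h₂ + 1) {x y a b : ℕ}
    (hx : G q h₂ e o x = some a) (hy : G q h₂ e o y = some b)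
    (hab : (a : ZMod (2*q)) - (x : ZMod (2*q)) = (b : ZMod (2*q)) - (y : ZMod (2*q))) :
    x = y := by
  haveI : NeZero (2 * q) := ⟨by omega⟩
  obtain ⟨v, hv, hveq, hvc⟩ := G_sub hh hq ho he hx
  obtain ⟨w, hw, hweq, hwc⟩ := G_sub hh hq ho he hy
  have : v = w := by
    have : ((v : ZMod (2*q))).val = ((w : ZMod (2*q))).val := by
      rw [← hveq, hab, hweq]
    rwa [ZMod.val_cast_of_lt hv, ZMod.val_cast_of_lt hw] at this
  omega

end CPLS

/-- A partial latin square of order `r`, with rows, columns and symbols indexed by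
residues modulo `r`: each cell is empty (`none`) or filled, and no symbol is repeated
in a row or in a column. -/
def IsPartialLatinSquare {r : ℕ} (L : ZMod r → ZMod r → Option (ZMod r)) : Prop :=
  (∀ i j j' s, L i j = some s → L i j' = some s → j = j') ∧
  (∀ i i' j s, L i j = some s → L i' j = some s → i = i')

/-- There exists a partial latin square of order `r` whose filled cells are the disjoint
union of `r − h₁` transversals, such that (i) all cells `(i, j)` with
`j ⊖ i ∈ {2ℓ−1 : ℓ ∈ [h₂]} ∪ {r+1−2ℓ : ℓ ∈ [h₂]}` are empty, and (ii) for all `i` and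
all `0 ≤ d ≤ h₂ − 1`, `L(i, i ⊕ 2d) = L(i ⊕ 2d, i) = i ⊕ d` (so that the cells `(i, j)`
with `j ⊖ i ∈ {2ℓ : ℓ ∈ [h₂−1]} ∪ {r+2−2ℓ : ℓ ∈ [h₂]}` form transversals). -/
theorem exists_circulant_partial_latin_square (r h₁ h₂ : ℕ)
    (hre : Even r) (h2lb : 1 ≤ h₂) (h2ub : 4 * h₂ ≤ r)
    (h1lb : 2 * h₂ ≤ h₁) (h1ub : h₁ + 2 * h₂ ≤ r + 1) :
    ∃ L : ZMod r → ZMod r → Option (ZMod r),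
      IsPartialLatinSquare L ∧
      -- the filled cells are the disjoint union of `r − h₁` transversals
      (∃ t : Fin (r - h₁) → ZMod r → ZMod r,
        (∀ m, Function.Bijective (t m)) ∧
        (∀ m, ∃ f : ZMod r → ZMod r, Function.Bijective f ∧
          ∀ i, L i (t m i) = some (f i)) ∧
        (∀ i j, L i j ≠ none ↔ ∃! m, t m i = j)) ∧
      -- (i) the prescribed empty cells
      (∀ i j : ZMod r,
        (∃ ℓ ∈ Finset.Icc 1 h₂,
          j - i = 2 * (ℓ : ZMod r) - 1 ∨ j - i = (r : ZMod r) + 1 - 2 * (ℓ : ZMod r)) →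
        L i j = none) ∧
      -- (ii) the prescribed transversals
      (∀ i : ZMod r, ∀ d : ℕ, d ≤ h₂ - 1 →
        L i (i + 2 * (d : ZMod r)) = some (i + (d : ZMod r)) ∧
        L (i + 2 * (d : ZMod r)) i = some (i + (d : ZMod r))) := by
  open CPLS in
  obtain ⟨q, rfl⟩ : ∃ q, r = 2 * q := by
    obtain ⟨k, hk⟩ := hre; exact ⟨k, by omega⟩
  have hq : 2 * h₂ ≤ q := by omega
  obtain ⟨e, o, he, ho, hN⟩ :
      ∃ e o, h₂ + e ≤ q - h₂ + 1 ∧ o ≤ q - 2 * h₂ ∧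
        2 * q - h₁ = (h₂ + e) + o + (h₂ - 1) := by
    refine ⟨min (2 * q + 1 - (h₁ + 2 * h₂)) (q - 2 * h₂ + 1),
      (2 * q + 1 - (h₁ + 2 * h₂)) - min (2 * q + 1 - (h₁ + 2 * h₂)) (q - 2 * h₂ + 1),
      by omega, by omega, by omega⟩
  haveI : NeZero (2 * q) := ⟨by omega⟩
  have hval : ∀ z : ZMod (2 * q), ((z.val : ℕ) : ZMod (2 * q)) = z := fun z => by
    simp [ZMod.natCast_val, ZMod.cast_id]
  refine ⟨fun i j => Option.map (fun v : ℕ => i + (v : ZMod (2 * q)))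
      (G q h₂ e o (j - i).val),
    ⟨?_, ?_⟩, ?_, ?_, ?_⟩
  · -- rows
    intro i j j' s hj hj'
    dsimp only at hj hj'
    simp only [Option.map_eq_some_iff] at hj hj'
    obtain ⟨a, ha, haeq⟩ := hj
    obtain ⟨b, hb, hbeq⟩ := hj'
    have hab : (a : ZMod (2 * q)) = (b : ZMod (2 * q)) := by
      have := haeq.trans hbeq.symm
      exact add_left_cancel this
    have : a = b := by
      have := congrArg ZMod.val hab
      rwa [ZMod.val_cast_of_lt (G_val_lt h2lb hq ho he ha),
        ZMod.val_cast_of_lt (G_val_lt h2lb hq ho he hb)] at this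
    subst this
    have hxy := G_inj h2lb hq ho he ha hb
    have : j - i = j' - i := by
      rw [← hval (j - i), ← hval (j' - i), hxy]
    exact sub_left_inj.mp this
  · -- columns
    intro i i' j s hj hj'
    dsimp only at hj hj'
    simp only [Option.map_eq_some_iff] at hj hj'
    obtain ⟨a, ha, haeq⟩ := hj
    obtain ⟨b, hb, hbeq⟩ := hj'
    have hix : i = j - ((j - i).val : ZMod (2 * q)) := by rw [hval]; ring
    have hix' : i' = j - ((j - i').val : ZMod (2 * q)) := by rw [hval]; ring
    have hsub : (a : ZMod (2 * q)) - ((j - i).val : ZMod (2 * q))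
        = (b : ZMod (2 * q)) - ((j - i').val : ZMod (2 * q)) := by
      have h1 : i + (a : ZMod (2 * q)) = i' + (b : ZMod (2 * q)) := haeq.trans hbeq.symm
      rw [hix, hix'] at h1
      linear_combination h1
    have hxy := G_sub_inj h2lb hq ho he ha hb hsub
    have : j - i = j - i' := by
      rw [← hval (j - i), ← hval (j - i'), hxy]
    have := sub_right_injective this
    exact this.symm ▸ rfl
  · -- transversals
    have hmlt : ∀ m : Fin (2 * q - h₁), (m : ℕ) < (h₂ + e) + o + (h₂ - 1) := fun m => by
      have := m.isLt; omega
    have hdlt : ∀ m : Fin (2 * q - h₁), dfun q h₂ e o m < 2 * q := fun m => by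
      obtain ⟨a, ha⟩ := dfun_some h2lb hq ho he (hmlt m)
      exact G_lt h2lb hq ho he ha
    refine ⟨fun m i => i + ((dfun q h₂ e o m : ℕ) : ZMod (2 * q)), fun m =>
      (Equiv.addRight _).bijective, ?_, ?_⟩
    · intro m
      obtain ⟨a, ha⟩ := dfun_some h2lb hq ho he (hmlt m)
      refine ⟨fun i => i + (a : ZMod (2 * q)), (Equiv.addRight _).bijective, fun i => ?_⟩
      have hdv : (i + ((dfun q h₂ e o m : ℕ) : ZMod (2 * q)) - i).val = dfun q h₂ e o m := by
        rw [add_sub_cancel_left, ZMod.val_cast_of_lt (hdlt m)]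
      dsimp only
      rw [hdv, ha, Option.map_some]
    · intro i j
      constructor
      · intro hne
        dsimp only at hne
        obtain ⟨a, ha⟩ : ∃ a, G q h₂ e o (j - i).val = some a := by
          rcases hG : G q h₂ e o (j - i).val with _ | a
          · exact absurd (by simp [hG]) hne
          · exact ⟨a, rfl⟩
        obtain ⟨m0, hm0lt, hm0⟩ := dfun_surj h2lb hq ho he ha
        refine ⟨⟨m0, by omega⟩, ?_, ?_⟩
        · show i + _ = j
          rw [show dfun q h₂ e o (⟨m0, by omega⟩ : Fin (2 * q - h₁)).val = (j - i).val from hm0,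
            hval]
          ring
        · intro m' hm'
          have : ((dfun q h₂ e o m' : ℕ) : ZMod (2 * q)) = j - i := by
            rw [← hm']; ring
          have hv : dfun q h₂ e o m' = (j - i).val := by
            rw [← this, ZMod.val_cast_of_lt (hdlt m')]
          exact Fin.ext (dfun_inj h2lb hq ho he (hmlt m') hm0lt (hv.trans hm0.symm))
      · rintro ⟨m, hm, -⟩
        have : ((dfun q h₂ e o m : ℕ) : ZMod (2 * q)) = j - i := by
          rw [← hm]; ring
        have hv : dfun q h₂ e o m = (j - i).val := by
          rw [← this, ZMod.val_cast_of_lt (hdlt m)]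
        obtain ⟨a, ha⟩ := dfun_some h2lb hq ho he (hmlt m)
        rw [hv] at ha
        dsimp only
        simp [ha]
  · -- (i) empty cells
    rintro i j ⟨ℓ, hℓ, hc | hc⟩ <;> rw [Finset.mem_Icc] at hℓ <;> dsimp only
    · have hcast : ((2 * ℓ - 1 : ℕ) : ZMod (2 * q)) = 2 * (ℓ : ZMod (2 * q)) - 1 := by
        push_cast [Nat.cast_sub (show 1 ≤ 2 * ℓ by omega)]
        ring
      have hvv : (j - i).val = 2 * ℓ - 1 := by
        rw [hc, ← hcast, ZMod.val_cast_of_lt (by omega)]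
      rw [hvv]
      simp [G_odd_none (by omega) (by omega : (2 * ℓ - 1) / 2 < h₂ ∨ h₂ + o ≤ (2 * ℓ - 1) / 2)]
    · have hcast : ((2 * q + 1 - 2 * ℓ : ℕ) : ZMod (2 * q)) =
          ((2 * q : ℕ) : ZMod (2 * q)) + 1 - 2 * (ℓ : ZMod (2 * q)) := by
        push_cast [Nat.cast_sub (show 2 * ℓ ≤ 2 * q + 1 by omega)]
        ring
      have hvv : (j - i).val = 2 * q + 1 - 2 * ℓ := by
        rw [hc, ← hcast, ZMod.val_cast_of_lt (by omega)]
      rw [hvv]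
      simp [G_odd_none (by omega)
        (by omega : (2 * q + 1 - 2 * ℓ) / 2 < h₂ ∨ h₂ + o ≤ (2 * q + 1 - 2 * ℓ) / 2)]
  · -- (ii) prescribed transversals
    intro i d hd
    dsimp only
    have hd' : d < h₂ := by omega
    constructor
    · have hcast : ((2 * d : ℕ) : ZMod (2 * q)) = 2 * (d : ZMod (2 * q)) := by push_cast; ring
      have hvv : (i + 2 * (d : ZMod (2 * q)) - i).val = 2 * d := by
        rw [add_sub_cancel_left, ← hcast, ZMod.val_cast_of_lt (by omega)]
      rw [hvv, G_even_small hd']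
      simp
    · rcases Nat.eq_zero_or_pos d with rfl | hd1
      · have hvv : (i - (i + 2 * ((0 : ℕ) : ZMod (2 * q)))).val = 2 * 0 := by
          simp
        rw [hvv, G_even_small hd']
        simp
      · have hcast : ((2 * q - 2 * d : ℕ) : ZMod (2 * q)) = -(2 * (d : ZMod (2 * q))) := by
          rw [CPLS.cast_sub_eq (2 * d) (by omega)]
          push_cast; ring
        have hvv : (i - (i + 2 * (d : ZMod (2 * q)))).val = 2 * q - 2 * d := by
          rw [show i - (i + 2 * (d : ZMod (2 * q))) = -(2 * (d : ZMod (2 * q))) by ring,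
            ← hcast, ZMod.val_cast_of_lt (by omega)]
        have hsplit : 2 * q - 2 * d = 2 * (q - d) := by omega
        rw [hvv, hsplit, G_even_big (by omega) (Or.inr ⟨by omega, by omega⟩)]
        have hsym : ((q - d + q : ℕ) : ZMod (2 * q)) = -(d : ZMod (2 * q)) := by
          rw [show q - d + q = 2 * q - d by omega, CPLS.cast_sub_eq d (by omega)]
        simp only [Option.map_some, hsym, Option.some.injEq]
        ring
end
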